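/- Let G be a graph with at least two vertices, let v be a vertex of G, and let G' be the graph obtained from G by adding a new vertex v' and the edge vv'. For a set S' of vertices of G': S' is a type I set for v' in G' with L_{S'}(v') = −1 if and only if S' ⊆ V(G), S' is a type I set for v in G, and L_{S'}(v) = 1. -/

import Mathlib

/-- A set of vertices is independent: no two of its vertices are adjacent. -/
def IndepSet {V : Type*} (G : SimpleGraph V) (S : Set V) : Prop :=
  ∀ u ∈ S, ∀ w ∈ S, ¬ G.Adj u w

/-- `S` is a type I set for `v` in `G`: `S` is independent, every vertex
`u ∉ S ∪ {v}` has at least one and at most two neighbors in `S`, and `v` either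
belongs to `S` or has at most two neighbors in `S`. -/
def TypeISet {V : Type*} (G : SimpleGraph V) (v : V) (S : Set V) : Prop :=
  IndepSet G S ∧
    (∀ u, u ∉ S → u ≠ v →
      1 ≤ (S ∩ G.neighborSet u).ncard ∧ (S ∩ G.neighborSet u).ncard ≤ 2) ∧
    (v ∈ S ∨ (S ∩ G.neighborSet v).ncard ≤ 2)

/-- The labeling `L_S(v) = l` : `0` if `v ∈ S`; `k ≥ 1` if `v ∉ S` and `v` has exactly
`k` neighbors in `S`; `-1` if `N[v] ∩ S = ∅` and every neighbor of `v` has exactly one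
neighbor in `S`; `-2` if `N[v] ∩ S = ∅` and some neighbor of `v` has exactly two
neighbors in `S`. -/
def HasLabel {V : Type*} (G : SimpleGraph V) (v : V) (S : Set V) (l : ℤ) : Prop :=
  (v ∈ S ∧ l = 0) ∨
  (v ∉ S ∧ ∃ k : ℕ, 1 ≤ k ∧ (S ∩ G.neighborSet v).ncard = k ∧ l = (k : ℤ)) ∨
  (v ∉ S ∧ S ∩ G.neighborSet v = ∅ ∧
    (∀ u ∈ G.neighborSet v, (S ∩ G.neighborSet u).ncard = 1) ∧ l = -1) ∨
  (v ∉ S ∧ S ∩ G.neighborSet v = ∅ ∧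
    (∃ u ∈ G.neighborSet v, (S ∩ G.neighborSet u).ncard = 2) ∧ l = -2)

/-- The star `K_{1,r}` with center `none` and the `r` leaves `some i`. -/
def starGraph (r : ℕ) : SimpleGraph (Option (Fin r)) where
  Adj a b := (a = none ∧ b ≠ none) ∨ (a ≠ none ∧ b = none)
  symm := ⟨by intro a b h; tauto⟩
  loopless := ⟨by intro a h; tauto⟩

/-- The graph obtained from `G` by adding a new vertex `none` adjacent only to `v`. -/
def addLeaf {V : Type*} (G : SimpleGraph V) (v : V) : SimpleGraph (Option V) where
  Adj a b := match a, b with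
    | some x, some y => G.Adj x y
    | none, some y => y = v
    | some x, none => x = v
    | none, none => False
  symm := by
    constructor
    intro a b h
    match a, b with
    | some x, some y => exact h.symm
    | none, some y => exact h
    | some x, none => exact h
    | none, none => exact h
  loopless := by
    constructor
    intro a h
    match a with
    | some x => exact G.loopless.irrefl x h
    | none => exact h

/-- The graph obtained from the disjoint union of `G` and `H` by adding the edge
between `v` (in `G`) and `v'` (in `H`). -/
def joinAt {V W : Type*} (G : SimpleGraph V) (H : SimpleGraph W) (v : V) (v' : W) :
    SimpleGraph (V ⊕ W) where
  Adj a b := match a, b with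
    | Sum.inl x, Sum.inl y => G.Adj x y
    | Sum.inr x, Sum.inr y => H.Adj x y
    | Sum.inl x, Sum.inr y => x = v ∧ y = v'
    | Sum.inr x, Sum.inl y => x = v' ∧ y = v
  symm := by
    constructor
    intro a b h
    match a, b with
    | Sum.inl x, Sum.inl y => exact h.symm
    | Sum.inr x, Sum.inr y => exact h.symm
    | Sum.inl x, Sum.inr y => exact ⟨h.2, h.1⟩
    | Sum.inr x, Sum.inl y => exact ⟨h.2, h.1⟩
  loopless := by
    constructor
    intro a h
    match a with
    | Sum.inl x => exact G.loopless.irrefl x h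
    | Sum.inr x => exact H.loopless.irrefl x h


section Label

variable {V : Type*} (G : SimpleGraph V) (v : V) (S : Set V)

lemma hasLabel_one_iff : HasLabel G v S 1 ↔ v ∉ S ∧ (S ∩ G.neighborSet v).ncard = 1 := by
  constructor
  · rintro (⟨-, h⟩ | ⟨hv, k, -, hk, h⟩ | ⟨-, -, -, h⟩ | ⟨-, -, -, h⟩)
    · omega
    · exact ⟨hv, by omega⟩
    · omega
    · omega
  · rintro ⟨hv, hn⟩
    exact .inr (.inl ⟨hv, 1, le_rfl, hn, rfl⟩)

lemma hasLabel_neg_one_iff :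
    HasLabel G v S (-1) ↔ v ∉ S ∧ S ∩ G.neighborSet v = ∅ ∧
      ∀ u ∈ G.neighborSet v, (S ∩ G.neighborSet u).ncard = 1 := by
  constructor
  · rintro (⟨-, h⟩ | ⟨-, k, -, -, h⟩ | ⟨hv, hempty, hnbr, -⟩ | ⟨-, -, -, h⟩)
    · omega
    · omega
    · exact ⟨hv, hempty, hnbr⟩
    · omega
  · rintro ⟨hv, hempty, hnbr⟩
    exact .inr (.inr (.inl ⟨hv, hempty, hnbr, rfl⟩))

end Label

section AddLeaf

variable {V : Type*} (G : SimpleGraph V) (v : V)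

lemma addLeaf_neighborSet_none : (addLeaf G v).neighborSet none = {some v} := by
  ext (_ | y) <;> simp [SimpleGraph.neighborSet, addLeaf]

lemma image_some_inter_addLeaf_neighborSet_some (S : Set V) (u : V) :
    some '' S ∩ (addLeaf G v).neighborSet (some u) = some '' (S ∩ G.neighborSet u) := by
  ext (_ | y) <;> simp [SimpleGraph.neighborSet, addLeaf]

lemma ncard_image_some_inter_addLeaf_neighborSet_some (S : Set V) (u : V) :
    (some '' S ∩ (addLeaf G v).neighborSet (some u)).ncard = (S ∩ G.neighborSet u).ncard := by
  rw [image_some_inter_addLeaf_neighborSet_some,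
    Set.ncard_image_of_injective _ (Option.some_injective V)]

lemma indepSet_addLeaf_image_some_iff (S : Set V) :
    IndepSet (addLeaf G v) (some '' S) ↔ IndepSet G S := by
  simp only [IndepSet, Set.forall_mem_image]
  rfl

/-- In `addLeaf G v` the vertex `v` is no longer exempt from the domination condition, while the
leaf itself, having the single neighbor `v`, never violates its own condition. -/
lemma typeISet_addLeaf_none_image_some_iff (S : Set V) :
    TypeISet (addLeaf G v) none (some '' S) ↔
      TypeISet G v S ∧ (v ∈ S ∨ 1 ≤ (S ∩ G.neighborSet v).ncard) := by
  have hleaf : (some '' S ∩ (addLeaf G v).neighborSet none).ncard ≤ 2 := by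
    rw [addLeaf_neighborSet_none]
    exact (Set.ncard_inter_le_ncard_right _ _).trans (by simp)
  simp only [TypeISet, indepSet_addLeaf_image_some_iff, hleaf, or_true, and_true]
  constructor
  · rintro ⟨hind, hdom⟩
    have hdom' : ∀ x ∉ S, 1 ≤ (S ∩ G.neighborSet x).ncard ∧ (S ∩ G.neighborSet x).ncard ≤ 2 := by
      intro x hx
      simpa [ncard_image_some_inter_addLeaf_neighborSet_some] using hdom (some x) (by simpa) (by simp)
    exact ⟨⟨hind, fun x hx _ => hdom' x hx, (em _).imp_right fun hv => (hdom' v hv).2⟩,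
      (em _).imp_right fun hv => (hdom' v hv).1⟩
  · rintro ⟨⟨hind, hdom, hv_le⟩, hv_ge⟩
    refine ⟨hind, ?_⟩
    rintro (_ | x) hx hx_ne
    · exact absurd rfl hx_ne
    have hx : x ∉ S := by simpa using hx
    rw [ncard_image_some_inter_addLeaf_neighborSet_some]
    obtain rfl | hxv := eq_or_ne x v
    · exact ⟨hv_ge.resolve_left hx, hv_le.resolve_left hx⟩
    · exact hdom x hx hxv

lemma hasLabel_addLeaf_none_neg_one_iff (S : Set V) :
    HasLabel (addLeaf G v) none (some '' S) (-1) ↔ HasLabel G v S 1 := by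
  rw [hasLabel_neg_one_iff, hasLabel_one_iff, addLeaf_neighborSet_none, Set.inter_singleton_eq_empty,
    (Option.some_injective V).mem_set_image]
  simp [ncard_image_some_inter_addLeaf_neighborSet_some, -Set.ncard_eq_one]

lemma typeISet_addLeaf_none_and_hasLabel_neg_one_iff (S : Set V) :
    TypeISet (addLeaf G v) none (some '' S) ∧ HasLabel (addLeaf G v) none (some '' S) (-1) ↔
      TypeISet G v S ∧ HasLabel G v S 1 := by
  rw [typeISet_addLeaf_none_image_some_iff, hasLabel_addLeaf_none_neg_one_iff]
  refine ⟨fun ⟨⟨hS, _⟩, hl⟩ => ⟨hS, hl⟩, fun ⟨hS, hl⟩ => ⟨⟨hS, .inr ?_⟩, hl⟩⟩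
  exact ((hasLabel_one_iff G v S).1 hl).2.ge

end AddLeaf

theorem statement12_general {V : Type*} (G : SimpleGraph V)
    (v : V) (S' : Set (Option V)) :
    (TypeISet (addLeaf G v) none S' ∧ HasLabel (addLeaf G v) none S' (-1)) ↔
      ∃ S : Set V, S' = some '' S ∧ TypeISet G v S ∧ HasLabel G v S 1 := by
  constructor
  · intro h
    have hnone : none ∉ S' := ((hasLabel_neg_one_iff _ _ _).1 h.2).1
    have hS' : S' = some '' (some ⁻¹' S') :=
      (Set.image_preimage_eq_of_subset fun x hx =>
        Option.ne_none_iff_exists.1 (ne_of_mem_of_not_mem hx hnone)).symm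
    rw [hS'] at h
    exact ⟨_, hS', (typeISet_addLeaf_none_and_hasLabel_neg_one_iff G v _).1 h⟩
  · rintro ⟨S, rfl, h⟩
    exact (typeISet_addLeaf_none_and_hasLabel_neg_one_iff G v S).2 h

theorem statement12 {V : Type*} [Fintype V] [Nontrivial V] (G : SimpleGraph V)
    (v : V) (S' : Set (Option V)) :
    (TypeISet (addLeaf G v) none S' ∧ HasLabel (addLeaf G v) none S' (-1)) ↔
      ∃ S : Set V, S' = some '' S ∧ TypeISet G v S ∧ HasLabel G v S 1 :=
  statement12_general G v S'
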